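/- arXiv:2603.19911 — 2 statements merged into one kernel-verified Lean document; each statement's English description precedes it below -/
import Mathlib

section
/- Let X₁, Y₁ be positive definite complex n×n matrices and X₂, Y₂ be positive definite complex m×m matrices. Then D_op(X₁ ⊗ X₂ ‖ Y₁ ⊗ Y₂) = D_op(X₁‖Y₁) ⊗ X₂ + X₁ ⊗ D_op(X₂‖Y₂). -/
open Matrix Kronecker
open scoped ComplexOrder

noncomputable section

/-- Apply a real function to a complex matrix via the spectral decomposition
(meaningful for Hermitian matrices; defined as `0` otherwise). -/
def matFun {n : Type*} [Fintype n] [DecidableEq n]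
    (f : ℝ → ℝ) (A : Matrix n n ℂ) : Matrix n n ℂ :=
  if hA : A.IsHermitian then
    (hA.eigenvectorUnitary : Matrix n n ℂ) *
      Matrix.diagonal (fun i => (f (hA.eigenvalues i) : ℂ)) *
      (hA.eigenvectorUnitary : Matrix n n ℂ)ᴴ
  else 0

/-- Real power of a matrix (via the spectral decomposition). -/
def mpow {n : Type*} [Fintype n] [DecidableEq n] (A : Matrix n n ℂ) (t : ℝ) :
    Matrix n n ℂ :=
  matFun (fun x => x ^ t) A

/-- Logarithm of a matrix (via the spectral decomposition). -/
def mlog {n : Type*} [Fintype n] [DecidableEq n] (A : Matrix n n ℂ) : Matrix n n ℂ :=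
  matFun Real.log A

/-- The operator relative entropy `D_op(X‖Y) = X^{1/2} log(X^{1/2} Y⁻¹ X^{1/2}) X^{1/2}`. -/
def Dop {n : Type*} [Fintype n] [DecidableEq n] (X Y : Matrix n n ℂ) : Matrix n n ℂ :=
  mpow X (1/2) * mlog (mpow X (1/2) * Y⁻¹ * mpow X (1/2)) * mpow X (1/2)

/-- The Belavkin--Staszewski relative entropy `D̂(ρ‖σ) = Re Tr[D_op(ρ‖σ)]`. -/
def BSEntropy {n : Type*} [Fintype n] [DecidableEq n] (ρ σ : Matrix n n ℂ) : ℝ :=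
  (Dop ρ σ).trace.re

/-- The weighted matrix geometric mean `G_t(X,Y) = X^{1/2} (X^{-1/2} Y X^{-1/2})^t X^{1/2}`. -/
def geoMean {n : Type*} [Fintype n] [DecidableEq n] (t : ℝ) (X Y : Matrix n n ℂ) :
    Matrix n n ℂ :=
  mpow X (1/2) * mpow (mpow X (-(1/2)) * Y * mpow X (-(1/2))) t * mpow X (1/2)

/-- Partial trace over the second (B) factor. -/
def ptraceB {R B : Type*} [Fintype B] (M : Matrix (R × B) (R × B) ℂ) : Matrix R R ℂ :=
  Matrix.of fun r r' => ∑ b, M (r, b) (r', b)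

/-- Partial trace over the first (R) factor. -/
def ptraceR {R A : Type*} [Fintype R] (M : Matrix (R × A) (R × A) ℂ) : Matrix A A ℂ :=
  Matrix.of fun a a' => ∑ r, M (r, a) (r, a')

/-- The map associated to a Choi matrix `J` (indexed by `(A × B) × (A × B)`), applied to a
matrix indexed by `(R × A) × (R × A)`. -/
def choiMap {R A B : Type*} [Fintype A] (J : Matrix (A × B) (A × B) ℂ)
    (X : Matrix (R × A) (R × A) ℂ) : Matrix (R × B) (R × B) ℂ :=
  Matrix.of fun p q => ∑ a, ∑ a', X (p.1, a) (q.1, a') * J (a, p.2) (a', q.2)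


/-!
Under the identification of the spectral calculus `matFun` with Mathlib's continuous functional
calculus, `D_op(X‖Y) = √X log(√X Y⁻¹ √X) √X`. Positive square roots tensorize by uniqueness. For
the logarithm, `A ⊗ B = (A ⊗ 1)(1 ⊗ B)` is a product of commuting positive matrices, and `exp`
turns sums of commuting elements into products, so `log (A ⊗ B) = log A ⊗ 1 + 1 ⊗ log B`; here the
amplifications `A ↦ A ⊗ 1` and `B ↦ 1 ⊗ B` are ⋆-homomorphisms and so commute with the functional
calculus. Expanding `(√X₁ ⊗ √X₂)(L₁ ⊗ 1 + 1 ⊗ L₂)(√X₁ ⊗ √X₂)` then gives the formula.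
-/

-- The operator norm makes square matrices a C⋆-algebra, ordered by `A ≤ B ↔ (B - A).PosSemidef`.
open scoped MatrixOrder Matrix.Norms.L2Operator

section FunctionalCalculus

variable {A : Type*} [CStarAlgebra A] [PartialOrder A] [StarOrderedRing A]

theorem CFC.log_mul_of_commute {a b : A} (hab : Commute a b) (ha : IsStrictlyPositive a)
    (hb : IsStrictlyPositive b) : CFC.log (a * b) = CFC.log a + CFC.log b := by
  let : NormedAlgebra ℚ A := .restrictScalars ℚ ℂ A
  have hlog : Commute (CFC.log a) (CFC.log b) :=
    ((hab.cfc_real Real.log).symm.cfc_real Real.log).symm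
  calc CFC.log (a * b)
      = CFC.log (NormedSpace.exp (CFC.log a) * NormedSpace.exp (CFC.log b)) := by
        rw [CFC.exp_log a, CFC.exp_log b]
    _ = CFC.log (NormedSpace.exp (CFC.log a + CFC.log b)) := by
        rw [← NormedSpace.exp_add_of_commute hlog]
    _ = CFC.log a + CFC.log b := CFC.log_exp _ (IsSelfAdjoint.log.add .log)

end FunctionalCalculus

section SpectralCalculus

variable {n : Type*} [Fintype n] [DecidableEq n]

theorem matFun_eq_cfc (f : ℝ → ℝ) (A : Matrix n n ℂ) : matFun f A = cfc f A := by
  by_cases hA : A.IsHermitian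
  · rw [matFun, dif_pos hA, hA.cfc_eq]
    rfl
  · rw [matFun, dif_neg hA]
    exact (cfc_apply_of_not_predicate A hA).symm

theorem mlog_eq_log (A : Matrix n n ℂ) : mlog A = CFC.log A :=
  matFun_eq_cfc Real.log A

theorem mpow_eq_rpow {A : Matrix n n ℂ} (hA : A.PosSemidef) (t : ℝ) : mpow A t = A ^ t := by
  rw [mpow, matFun_eq_cfc, CFC.rpow_eq_cfc_real hA.nonneg]

theorem Dop_eq_sqrt_mul_log_mul_sqrt {X : Matrix n n ℂ} (hX : X.PosSemidef) (Y : Matrix n n ℂ) :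
    Dop X Y = CFC.sqrt X * CFC.log (CFC.sqrt X * Y⁻¹ * CFC.sqrt X) * CFC.sqrt X := by
  rw [Dop, mpow_eq_rpow hX, ← CFC.sqrt_eq_rpow, mlog_eq_log]

theorem posDef_sqrt_mul_inv_mul_sqrt {X Y : Matrix n n ℂ} (hX : X.PosDef) (hY : Y.PosDef) :
    (CFC.sqrt X * Y⁻¹ * CFC.sqrt X).PosDef := by
  have hS : IsStrictlyPositive (CFC.sqrt X) := hX.isStrictlyPositive.sqrt
  have hSH : (CFC.sqrt X)ᴴ = CFC.sqrt X := hS.isSelfAdjoint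
  simpa only [hSH] using
    hY.inv.conjTranspose_mul_mul_same (mulVec_injective_of_isUnit hS.isUnit)

end SpectralCalculus

namespace Matrix

variable {n m : Type*} [Fintype n] [DecidableEq n] [Fintype m] [DecidableEq m]

theorem _root_.StarAlgHom.map_cfc_matrix (φ : Matrix n n ℂ →⋆ₐ[ℂ] Matrix m m ℂ) (f : ℝ → ℝ)
    {A : Matrix n n ℂ} (hA : A.IsHermitian) : φ (cfc f A) = cfc f (φ A) :=
  φ.map_cfc f A (A.finite_real_spectrum.continuousOn f)
    (LinearMap.continuous_of_finiteDimensional φ.toLinearMap) hA (hA.isSelfAdjoint.map φ)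

def kroneckerOneStarAlgHom : Matrix n n ℂ →⋆ₐ[ℂ] Matrix (n × m) (n × m) ℂ where
  toFun A := A ⊗ₖ 1
  map_one' := one_kronecker_one
  map_mul' A B := by rw [← mul_kronecker_mul, mul_one]
  map_zero' := zero_kronecker _
  map_add' A B := add_kronecker _ _ _
  commutes' c := by simp [Algebra.algebraMap_eq_smul_one, smul_kronecker]
  map_star' A := by simp [star_eq_conjTranspose, conjTranspose_kronecker]

def oneKroneckerStarAlgHom : Matrix m m ℂ →⋆ₐ[ℂ] Matrix (n × m) (n × m) ℂ where
  toFun B := 1 ⊗ₖ B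
  map_one' := one_kronecker_one
  map_mul' A B := by rw [← mul_kronecker_mul, mul_one]
  map_zero' := kronecker_zero _
  map_add' A B := kronecker_add _ _ _
  commutes' c := by simp [Algebra.algebraMap_eq_smul_one, kronecker_smul]
  map_star' B := by simp [star_eq_conjTranspose, conjTranspose_kronecker]

theorem sqrt_kronecker {A : Matrix n n ℂ} {B : Matrix m m ℂ} (hA : A.PosSemidef)
    (hB : B.PosSemidef) : CFC.sqrt (A ⊗ₖ B) = CFC.sqrt A ⊗ₖ CFC.sqrt B :=
  CFC.sqrt_unique
    (by rw [← mul_kronecker_mul, CFC.sqrt_mul_sqrt_self A hA.nonneg,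
      CFC.sqrt_mul_sqrt_self B hB.nonneg])
    ((CFC.sqrt_nonneg A).posSemidef.kronecker (CFC.sqrt_nonneg B).posSemidef).nonneg

theorem log_kronecker {A : Matrix n n ℂ} {B : Matrix m m ℂ} (hA : A.PosDef) (hB : B.PosDef) :
    CFC.log (A ⊗ₖ B) = CFC.log A ⊗ₖ 1 + 1 ⊗ₖ CFC.log B := by
  have hsplit : A ⊗ₖ B = (A ⊗ₖ 1) * (1 ⊗ₖ B) := by
    rw [← mul_kronecker_mul, mul_one, one_mul]
  have hcomm : Commute (A ⊗ₖ (1 : Matrix m m ℂ)) ((1 : Matrix n n ℂ) ⊗ₖ B) := by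
    rw [Commute, SemiconjBy, ← hsplit, ← mul_kronecker_mul, mul_one, one_mul]
  rw [hsplit, CFC.log_mul_of_commute hcomm (hA.kronecker PosDef.one).isStrictlyPositive
    (PosDef.one.kronecker hB).isStrictlyPositive]
  exact congrArg₂ (· + ·)
    (kroneckerOneStarAlgHom.map_cfc_matrix Real.log hA.isHermitian).symm
    (oneKroneckerStarAlgHom.map_cfc_matrix Real.log hB.isHermitian).symm

end Matrix

/-- tensorization of the operator relative entropy:
`D_op(X₁ ⊗ X₂ ‖ Y₁ ⊗ Y₂) = D_op(X₁‖Y₁) ⊗ X₂ + X₁ ⊗ D_op(X₂‖Y₂)`. -/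
theorem Dop_kronecker {n m : ℕ}
    (X₁ Y₁ : Matrix (Fin n) (Fin n) ℂ) (hX₁ : X₁.PosDef) (hY₁ : Y₁.PosDef)
    (X₂ Y₂ : Matrix (Fin m) (Fin m) ℂ) (hX₂ : X₂.PosDef) (hY₂ : Y₂.PosDef) :
    Dop (X₁ ⊗ₖ X₂) (Y₁ ⊗ₖ Y₂) = (Dop X₁ Y₁) ⊗ₖ X₂ + X₁ ⊗ₖ (Dop X₂ Y₂) := by
  rw [Dop_eq_sqrt_mul_log_mul_sqrt hX₁.posSemidef, Dop_eq_sqrt_mul_log_mul_sqrt hX₂.posSemidef,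
    Dop_eq_sqrt_mul_log_mul_sqrt (hX₁.kronecker hX₂).posSemidef,
    sqrt_kronecker hX₁.posSemidef hX₂.posSemidef, inv_kronecker, ← mul_kronecker_mul,
    ← mul_kronecker_mul, log_kronecker (posDef_sqrt_mul_inv_mul_sqrt hX₁ hY₁)
      (posDef_sqrt_mul_inv_mul_sqrt hX₂ hY₂), mul_add, add_mul]
  simp only [← mul_kronecker_mul, mul_one, CFC.sqrt_mul_sqrt_self X₁ hX₁.posSemidef.nonneg,
    CFC.sqrt_mul_sqrt_self X₂ hX₂.posSemidef.nonneg]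
end
end

section
/- Let A and B be positive definite complex n×n matrices. The function t ↦ G_t(A,B) from ℝ to the space of complex n×n matrices has derivative at t = 0 equal to −D_op(A‖B); that is, HasDerivAt (fun t => G_t(A,B)) (−D_op(A‖B)) 0. -/
open Matrix Kronecker
open scoped ComplexOrder

noncomputable section

attribute [local instance] Matrix.normedAddCommGroup Matrix.normedSpace

/-! With `S = A^{1/2}` and `M = A^{-1/2} B A^{-1/2}` (positive definite), `G_t(A,B) = S M^t S`,
and `t ↦ M^t` is differentiated eigenvalue by eigenvalue in the spectral decomposition of `M`,
giving the derivative `S (log M) S` at `0`. Since `S B⁻¹ S = M⁻¹` and `log M⁻¹ = -log M`, this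
is `-D_op(A‖B)`. -/

theorem HasDerivAt.const_mul_mul_const {n : Type*} [Fintype n] {f : ℝ → Matrix n n ℂ}
    {f' : Matrix n n ℂ} {s : ℝ} (hf : HasDerivAt f f' s) (P Q : Matrix n n ℂ) :
    HasDerivAt (fun t => P * f t * Q) (P * f' * Q) s :=
  (LinearMap.mulRight ℝ Q ∘ₗ LinearMap.mulLeft ℝ P).toContinuousLinearMap.hasFDerivAt
    |>.comp_hasDerivAt s hf

namespace Matrix

open scoped MatrixOrder

variable {n : Type*} [Fintype n] [DecidableEq n] {A : Matrix n n ℂ}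

lemma matFun_eq_cfc (f : ℝ → ℝ) (hA : A.IsHermitian) : matFun f A = cfc f A := by
  rw [matFun, dif_pos hA, hA.cfc_eq, IsHermitian.cfc, ← star_eq_conjTranspose]
  rfl

lemma isHermitian_matFun (f : ℝ → ℝ) (A : Matrix n n ℂ) : (matFun f A).IsHermitian := by
  by_cases hA : A.IsHermitian
  · rw [matFun_eq_cfc f hA]
    exact cfc_predicate f A
  · rw [matFun, dif_neg hA]
    exact isHermitian_zero

lemma hasDerivAt_matFun {F : ℝ → ℝ → ℝ} {F' : ℝ → ℝ} {s : ℝ} (hA : A.IsHermitian)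
    (hF : ∀ i, HasDerivAt (fun t => F t (hA.eigenvalues i)) (F' (hA.eigenvalues i)) s) :
    HasDerivAt (fun t => matFun (F t) A) (matFun F' A) s := by
  have hdiag : HasDerivAt (fun t => diagonal fun i => (F t (hA.eigenvalues i) : ℂ))
      (diagonal fun i => (F' (hA.eigenvalues i) : ℂ)) s :=
    (diagonalLinearMap n ℝ ℂ).toContinuousLinearMap.hasFDerivAt.comp_hasDerivAt s
      (hasDerivAt_pi.2 fun i => (hF i).ofReal_comp)
  simp only [matFun, dif_pos hA]
  exact hdiag.const_mul_mul_const _ _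

lemma mpow_zero (hA : A.IsHermitian) : mpow A 0 = 1 := by
  simp only [mpow, matFun_eq_cfc _ hA, Real.rpow_zero]
  exact cfc_const_one ℝ A

lemma mpow_add (hA : A.PosDef) (s t : ℝ) : mpow A (s + t) = mpow A s * mpow A t := by
  have hfin := A.finite_real_spectrum
  simp only [mpow, matFun_eq_cfc _ hA.isHermitian]
  rw [← cfc_mul _ _ A (hfin.continuousOn _) (hfin.continuousOn _)]
  exact cfc_congr fun x hx => Real.rpow_add (hA.isStrictlyPositive.spectrum_pos hx) s t

lemma mpow_neg_mul_mpow (hA : A.PosDef) (t : ℝ) : mpow A (-t) * mpow A t = 1 := by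
  rw [← mpow_add hA, neg_add_cancel, mpow_zero hA.isHermitian]

lemma hasDerivAt_mpow (hA : A.PosDef) (s : ℝ) :
    HasDerivAt (fun t => mpow A t) (mpow A s * mlog A) s := by
  have hfin := A.finite_real_spectrum
  have hderiv := hasDerivAt_matFun (F := fun t x => x ^ t) (F' := fun x => x ^ s * Real.log x)
    hA.isHermitian fun i => (Real.hasStrictDerivAt_const_rpow (hA.eigenvalues_pos i) s).hasDerivAt
  rwa [matFun_eq_cfc _ hA.isHermitian, cfc_mul _ _ A (hfin.continuousOn _) (hfin.continuousOn _),
    ← matFun_eq_cfc _ hA.isHermitian, ← matFun_eq_cfc _ hA.isHermitian] at hderiv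

lemma mlog_inv (hA : A.PosDef) : mlog A⁻¹ = -mlog A := by
  have hfin := A.finite_real_spectrum
  have hinv : A⁻¹ = cfc (fun x : ℝ => x⁻¹) A :=
    (nonsing_inv_eq_ringInverse A).trans (cfc_ringInverse_id (R := ℝ) A hA.isUnit).symm
  rw [mlog, mlog, matFun_eq_cfc _ hA.inv.isHermitian, matFun_eq_cfc _ hA.isHermitian, hinv,
    ← cfc_comp _ _ A (hg := (hfin.image _).continuousOn _) (hf := hfin.continuousOn _),
    ← cfc_neg]
  exact cfc_congr fun x _ => Real.log_inv x

lemma PosDef.conj_of_isHermitian {B C : Matrix n n ℂ} (hB : B.PosDef) (hC : C.IsHermitian)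
    (hCu : IsUnit C) : (C * B * C).PosDef := by
  simpa only [star_eq_conjTranspose, hC.eq] using (hCu.posDef_star_left_conjugate_iff).2 hB

end Matrix

/-- the derivative of `t ↦ G_t(A,B)` at `t = 0` is `−D_op(A‖B)`. -/
theorem hasDerivAt_geoMean_zero {n : ℕ}
    (A B : Matrix (Fin n) (Fin n) ℂ) (hA : A.PosDef) (hB : B.PosDef) :
    HasDerivAt (fun t : ℝ => geoMean t A B) (-(Dop A B)) 0 := by
  set S := mpow A (1/2)
  set C := mpow A (-(1/2))
  have hCS : C * S = 1 := mpow_neg_mul_mpow hA _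
  have hM : (C * B * C).PosDef := hB.conj_of_isHermitian (isHermitian_matFun _ A)
    (isUnit_iff_isUnit_det C |>.2 (isUnit_det_of_right_inverse hCS))
  have hMinv : (C * B * C)⁻¹ = S * B⁻¹ * S := by
    rw [Matrix.mul_inv_rev, Matrix.mul_inv_rev, inv_eq_right_inv hCS, mul_assoc]
  have hDop : Dop A B = -(S * mlog (C * B * C) * S) := by
    rw [Dop, ← hMinv, mlog_inv hM, mul_neg, neg_mul]
  have hderiv := (hasDerivAt_mpow hM 0).const_mul_mul_const S S
  simpa only [geoMean, mpow_zero hM.isHermitian, one_mul, hDop, neg_neg] using hderiv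
end
end
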